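/- Let 𝓕 be a thin family of finite subsets of ℕ, and let B be an infinite set that decides all of its finite subsets. If S ⊆ B is finite and B strongly accepts S, then B strongly accepts S ∪ {n} for all but finitely many n ∈ B. -/
import Mathlib


/-- `S` is an initial segment of `T` (finite sets identified with increasing enumerations). -/
def InitSeg (S T : Finset ℕ) : Prop :=
  ∃ S2 : Finset ℕ, T = S ∪ S2 ∧ ∀ a ∈ S, ∀ b ∈ S2, a < b

/-- A family of finite sets is thin: no member is a proper initial segment of another. -/
def ThinFam (F : Set (Finset ℕ)) : Prop :=
  ∀ S ∈ F, ∀ T ∈ F, InitSeg S T → S = T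

/-- Two finite sets are comparable if one is an initial segment of the other. -/
def Comparable (s t : Finset ℕ) : Prop := InitSeg s t ∨ InitSeg t s

/-- `B` accepts `S` (with respect to `F`): some `t ∈ F` comparable with `S`
satisfies `t ∖ S ⊆ B`. -/
def Accepts (F : Set (Finset ℕ)) (S : Finset ℕ) (B : Set ℕ) : Prop :=
  ∃ t ∈ F, Comparable t S ∧ ((t \ S : Finset ℕ) : Set ℕ) ⊆ B

/-- `B` rejects `S`: `B` does not accept `S`. -/
def Rejects (F : Set (Finset ℕ)) (S : Finset ℕ) (B : Set ℕ) : Prop :=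
  ¬ Accepts F S B

/-- `B` strongly accepts `S`: every infinite subset of `B` accepts `S`. -/
def StronglyAccepts (F : Set (Finset ℕ)) (S : Finset ℕ) (B : Set ℕ) : Prop :=
  ∀ C ⊆ B, C.Infinite → Accepts F S C

/-- `B` decides `S`: `B` rejects `S` or strongly accepts `S`. -/
def Decides (F : Set (Finset ℕ)) (S : Finset ℕ) (B : Set ℕ) : Prop :=
  Rejects F S B ∨ StronglyAccepts F S B

/-- If `B` decides all its finite subsets and strongly accepts `S ⊆ B`, then `B`
strongly accepts `S ∪ {n}` for all but finitely many `n ∈ B`. -/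
theorem strongly_accepts_insert_cofinite (F : Set (Finset ℕ)) (hF : ThinFam F)
    (B : Set ℕ) (hB : B.Infinite)
    (hdec : ∀ T : Finset ℕ, (T : Set ℕ) ⊆ B → Decides F T B)
    (S : Finset ℕ) (hSB : (S : Set ℕ) ⊆ B) (hacc : StronglyAccepts F S B) :
    (B ∩ {n | ¬ StronglyAccepts F (insert n S) B}).Finite := by
  by_contra hfin
  set D := B ∩ {n | ¬ StronglyAccepts F (insert n S) B} with hDdef
  have hDinf : D.Infinite := hfin
  have hDB : D ⊆ B := Set.inter_subset_left
  have hrej : ∀ n ∈ D, Rejects F (insert n S) B := by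
    intro n hn
    have hnB : n ∈ B := hn.1
    have hsub : ((insert n S : Finset ℕ) : Set ℕ) ⊆ B := by
      intro x hx
      simp only [Finset.coe_insert, Set.mem_insert_iff] at hx
      rcases hx with rfl | hx
      · exact hnB
      · exact hSB hx
    rcases hdec _ hsub with h | h
    · exact h
    · exact absurd h hn.2
  obtain ⟨t, htF, hcomp, hsub⟩ := hacc D hDB hDinf
  by_cases hne : (t \ S).Nonempty
  · -- t \ S nonempty forces InitSeg S t
    have hst : InitSeg S t := by
      rcases hcomp with h | h
      · obtain ⟨S2, hS, _⟩ := h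
        exfalso
        obtain ⟨x, hx⟩ := hne
        rw [Finset.mem_sdiff] at hx
        exact hx.2 (by rw [hS]; exact Finset.mem_union_left _ hx.1)
      · exact h
    obtain ⟨S2, ht, hlt⟩ := hst
    set n := (t \ S).min' hne with hn
    have hnts : n ∈ t \ S := (t \ S).min'_mem hne
    have hnD : n ∈ D := hsub hnts
    apply hrej n hnD
    refine ⟨t, htF, Or.inr ⟨(t \ S).erase n, ?_, ?_⟩, ?_⟩
    · ext x
      simp only [Finset.mem_union, Finset.mem_insert, Finset.mem_erase, Finset.mem_sdiff]
      constructor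
      · intro hx
        by_cases hxS : x ∈ S
        · exact Or.inl (Or.inr hxS)
        · by_cases hxn : x = n
          · exact Or.inl (Or.inl hxn)
          · exact Or.inr ⟨hxn, hx, hxS⟩
      · rintro (hx | hx)
        · rcases hx with rfl | hx
          · exact (Finset.mem_sdiff.mp hnts).1
          · rw [ht]; exact Finset.mem_union_left _ hx
        · exact hx.2.1
    · intro a ha b hb
      rw [Finset.mem_erase, Finset.mem_sdiff] at hb
      have hbS2 : b ∈ S2 := by
        have hbt : b ∈ t := hb.2.1
        rw [ht, Finset.mem_union] at hbt
        rcases hbt with h | h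
        · exact absurd h hb.2.2
        · exact h
      rcases Finset.mem_insert.mp ha with rfl | haS
      · exact lt_of_le_of_ne ((t \ S).min'_le b (Finset.mem_sdiff.mpr hb.2)) (Ne.symm hb.1)
      · exact hlt a haS b hbS2
    · intro x hx
      apply hDB
      apply hsub
      simp only [Finset.coe_sdiff, Set.mem_diff, Finset.mem_coe, Finset.mem_insert] at hx ⊢
      exact ⟨hx.1, fun h => hx.2 (Or.inr h)⟩
  · -- t \ S empty, so t ⊆ S
    have htS : t ⊆ S := Finset.sdiff_eq_empty_iff_subset.mp (Finset.not_nonempty_iff_eq_empty.mp hne)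
    have hts : InitSeg t S := by
      rcases hcomp with h | h
      · exact h
      · obtain ⟨S2, hS, _⟩ := h
        have : t = S := Finset.Subset.antisymm htS (by rw [hS]; exact Finset.subset_union_left)
        exact ⟨∅, by simp [this], by simp⟩
    obtain ⟨S2, hS, hlt⟩ := hts
    obtain ⟨n, hnD, hngt⟩ := hDinf.exists_gt (S.sup id)
    apply hrej n hnD
    refine ⟨t, htF, Or.inl ⟨insert n S2, ?_, ?_⟩, ?_⟩
    · ext x
      simp only [Finset.mem_insert, Finset.mem_union, hS]
      tauto
    · intro a ha b hb
      rcases Finset.mem_insert.mp hb with rfl | hbS2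
      · have haS : a ∈ S := htS ha
        calc a ≤ S.sup id := Finset.le_sup (f := id) haS
          _ < b := hngt
      · exact hlt a ha b hbS2
    · intro x hx
      exfalso
      simp only [Finset.coe_sdiff, Set.mem_diff, Finset.mem_coe, Finset.mem_insert] at hx
      exact hx.2 (Or.inr (htS hx.1))
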